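/- arXiv:1507.06583 — 5 statements merged into one kernel-verified Lean document; each statement's English description precedes it below -/
import Mathlib

section
/- Let G be a finite abelian group generated by elements x_1, ..., x_k. Suppose there exist positive integers r_1, ..., r_k such that |G| = r_1 · r_2 ··· r_k and the order of x_i divides r_i for each i. Then G is isomorphic to the direct sum Z/r_1 ⊕ Z/r_2 ⊕ ··· ⊕ Z/r_k. -/
/-- Let `G` be a finite abelian group generated by `x 1, …, x k`.  If there are positive
integers `r i` with `|G| = ∏ r i` and the order of `x i` divides `r i` for each `i`,
then `G ≅ ⨁ ℤ/r i`. -/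
theorem finite_abelian_group_iso_of_generators
    {G : Type*} [AddCommGroup G] [Finite G] {k : ℕ} (x : Fin k → G)
    (hgen : AddSubgroup.closure (Set.range x) = ⊤)
    (r : Fin k → ℕ) (hpos : ∀ i, 0 < r i)
    (hcard : Nat.card G = ∏ i, r i)
    (hord : ∀ i, addOrderOf (x i) ∣ r i) :
    Nonempty (G ≃+ ∀ i, ZMod (r i)) := by
  haveI : ∀ i, NeZero (r i) := fun i => ⟨(hpos i).ne'⟩
  haveI := Fintype.ofFinite G
  have hzero : ∀ i, (zmultiplesHom G (x i)) (r i : ℤ) = 0 := by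
    intro i
    simp only [zmultiplesHom_apply, natCast_zsmul]
    exact addOrderOf_dvd_iff_nsmul_eq_zero.mp (hord i)
  set φ : (∀ i, ZMod (r i)) →+ G :=
    ∑ i, (ZMod.lift (r i) ⟨zmultiplesHom G (x i), hzero i⟩).comp
      (Pi.evalAddMonoidHom (fun i => ZMod (r i)) i) with hφ
  have hsingle : ∀ i, φ (Pi.single i 1) = x i := by
    intro i
    rw [hφ, AddMonoidHom.finset_sum_apply]
    simp only [AddMonoidHom.comp_apply, Pi.evalAddMonoidHom_apply]
    rw [Finset.sum_eq_single i]
    · have h1 : (Pi.single i 1 : ∀ j, ZMod (r j)) i = ((1 : ℤ) : ZMod (r i)) := by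
        simp
      rw [h1, ZMod.lift_coe]
      simp
    · intro j _ hj
      rw [Pi.single_eq_of_ne hj, map_zero]
    · simp
  have hle : (⊤ : AddSubgroup G) ≤ φ.range := by
    rw [← hgen, AddSubgroup.closure_le]
    rintro _ ⟨i, rfl⟩
    exact ⟨Pi.single i 1, hsingle i⟩
  have hsurj : Function.Surjective φ := fun g => hle (AddSubgroup.mem_top g)
  have hcard' : Fintype.card (∀ i, ZMod (r i)) = Fintype.card G := by
    rw [Fintype.card_pi]
    simp only [ZMod.card]
    rw [← hcard, Nat.card_eq_fintype_card]
  have hbij : Function.Bijective φ :=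
    (Fintype.bijective_iff_surjective_and_card φ).mpr ⟨hsurj, hcard'⟩
  exact ⟨(AddEquiv.ofBijective φ hbij).symm⟩
end

section
/- For n ≥ 3, the determinant of the adjacency matrix of the n×n rook's graph equals (-2)^{(n-1)^2} · (n-2)^{2n-2} · 2(n-1); in particular the cokernel of the adjacency matrix (the Smith group) is a finite group of order 2^{(n-1)^2} · (n-2)^{2n-2} · 2(n-1). -/
/-- The adjacency matrix (over `ℤ`) of the `n × n` rook's graph: vertices are
squares of an `n × n` grid, adjacent when distinct and in the same row or column. -/
def rookAdj (n : ℕ) : Matrix (Fin n × Fin n) (Fin n × Fin n) ℤ :=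
  fun u v => if u ≠ v ∧ (u.1 = v.1 ∨ u.2 = v.2) then 1 else 0

/-- The Laplacian matrix `L = D - A` of the rook's graph, where `D` is the diagonal
matrix of vertex degrees. -/
def rookLap (n : ℕ) : Matrix (Fin n × Fin n) (Fin n × Fin n) ℤ :=
  Matrix.diagonal (fun u => ∑ v, rookAdj n u v) - rookAdj n

/-- The adjacency matrix (over `ℤ`) of the complement of the rook's graph. -/
def rookcAdj (n : ℕ) : Matrix (Fin n × Fin n) (Fin n × Fin n) ℤ :=
  fun u v => if u ≠ v ∧ u.1 ≠ v.1 ∧ u.2 ≠ v.2 then 1 else 0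

/-- The Laplacian matrix of the complement of the rook's graph. -/
def rookcLap (n : ℕ) : Matrix (Fin n × Fin n) (Fin n × Fin n) ℤ :=
  Matrix.diagonal (fun u => ∑ v, rookcAdj n u v) - rookcAdj n

/-!
The rook's graph is the Cartesian product `K_n □ K_n`, so its adjacency matrix is the Kronecker
sum `B ⊗ 1 + 1 ⊗ B` of the adjacency matrix `B = J - I` of `K_n`. A unimodular change of basis
(the all-ones vector followed by `e_1, …, e_{n-1}`) makes `B` upper triangular with diagonal
`d = (n - 1, -1, …, -1)`, and then the Kronecker sum is upper triangular in the lexicographic order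
with diagonal entries `d_i + d_j`. Multiplying these gives the determinant; since it is nonzero,
the Smith normal form shows that the cokernel over `ℤ` has order `|det|`.
-/

open Matrix Kronecker

namespace Matrix

variable {R m p : Type*} [DecidableEq m] [DecidableEq p]

def kroneckerSum [Semiring R] (A : Matrix m m R) (B : Matrix p p R) :
    Matrix (m × p) (m × p) R :=
  A ⊗ₖ 1 + 1 ⊗ₖ B

theorem blockTriangular_kroneckerSum [Semiring R] [LinearOrder m] [LinearOrder p]
    {S : Matrix m m R} {T : Matrix p p R} (hS : S.IsUpperTriangular) (hT : T.IsUpperTriangular) :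
    (kroneckerSum S T).BlockTriangular toLex := by
  rintro ⟨i, j⟩ ⟨k, l⟩ hlt
  rcases Prod.Lex.toLex_lt_toLex.mp hlt with hki | ⟨rfl, hlj⟩
  · simp [kroneckerSum, hS hki, hki.ne']
  · simp [kroneckerSum, hT hlj, hlj.ne']

variable [Fintype m] [Fintype p]

theorem det_kroneckerSum_of_isUpperTriangular [CommRing R] [LinearOrder m] [LinearOrder p]
    {S : Matrix m m R} {T : Matrix p p R} (hS : S.IsUpperTriangular) (hT : T.IsUpperTriangular) :
    (kroneckerSum S T).det = ∏ i, ∏ j, (S i i + T j j) := by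
  have h : ((kroneckerSum S T).submatrix ofLex ofLex :
      Matrix (Lex (m × p)) (Lex (m × p)) R).IsUpperTriangular :=
    (blockTriangular_kroneckerSum hS hT).submatrix
  rw [← det_submatrix_equiv_self (ofLex : Lex (m × p) ≃ _), det_of_isUpperTriangular h]
  exact (Fintype.prod_equiv ofLex _ (fun ij => S ij.1 ij.1 + T ij.2 ij.2) fun _ => by
    simp [kroneckerSum]).trans (Fintype.prod_prod_type _)

theorem kroneckerSum_mul_kronecker [CommSemiring R] {A S P : Matrix m m R}
    {B T Q : Matrix p p R} (hA : A * P = P * S) (hB : B * Q = Q * T) :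
    kroneckerSum A B * (P ⊗ₖ Q) = (P ⊗ₖ Q) * kroneckerSum S T := by
  simp only [kroneckerSum, add_mul, mul_add, ← mul_kronecker_mul, hA, hB, Matrix.one_mul,
    Matrix.mul_one]

theorem det_kroneckerSum_eq_of_mul_eq_mul [CommRing R] {A S P : Matrix m m R}
    {B T Q : Matrix p p R} (hA : A * P = P * S) (hB : B * Q = Q * T)
    (hP : IsUnit P.det) (hQ : IsUnit Q.det) :
    (kroneckerSum A B).det = (kroneckerSum S T).det := by
  have hPQ : IsUnit (P ⊗ₖ Q).det := by
    rw [det_kronecker]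
    exact (hP.pow _).mul (hQ.pow _)
  have h := congrArg det (kroneckerSum_mul_kronecker hA hB)
  rw [det_mul, det_mul, mul_comm] at h
  exact hPQ.mul_left_cancel h

theorem natCard_quotient_range_mulVecLin {ι : Type*} [Fintype ι] [DecidableEq ι]
    (A : Matrix ι ι ℤ) (hA : A.det ≠ 0) :
    Nat.card ((ι → ℤ) ⧸ LinearMap.range A.mulVecLin) = A.det.natAbs := by
  let e := LinearEquiv.ofInjective A.mulVecLin (mulVec_injective_of_det_ne_zero hA)
  rw [← Submodule.natAbs_det_equiv _ e, ← LinearMap.det_toLin']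
  rfl

end Matrix

theorem rookAdj_eq_kroneckerSum (n : ℕ) :
    rookAdj n = kroneckerSum ((⊤ : SimpleGraph (Fin n)).adjMatrix ℤ)
      ((⊤ : SimpleGraph (Fin n)).adjMatrix ℤ) := by
  ext ⟨i, j⟩ ⟨k, l⟩
  rcases eq_or_ne i k with rfl | hik <;> rcases eq_or_ne j l with rfl | hjl <;>
    simp [rookAdj, kroneckerSum, one_apply, *]

section CompleteGraph

variable (m : ℕ)

def triangularizingBasis : Matrix (Fin (m + 1)) (Fin (m + 1)) ℤ :=
  of fun i k => if k = 0 then 1 else (1 : Matrix (Fin (m + 1)) (Fin (m + 1)) ℤ) i k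

def completeAdjTriangular : Matrix (Fin (m + 1)) (Fin (m + 1)) ℤ :=
  of fun i k => if i = 0 then (if k = 0 then (m : ℤ) else 1) else if i = k then -1 else 0

theorem det_triangularizingBasis : (triangularizingBasis m).det = 1 := by
  refine (det_of_isLowerTriangular _ fun i k (hik : i < k) => ?_).trans
    (Finset.prod_eq_one fun i _ => ?_)
  · simp [triangularizingBasis, hik.ne, (i.zero_le.trans_lt hik).ne']
  · cases i using Fin.cases <;> simp [triangularizingBasis]

theorem completeAdjTriangular_isUpperTriangular :
    (completeAdjTriangular m).IsUpperTriangular := fun i k (hki : k < i) => by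
  simp [completeAdjTriangular, hki.ne', (k.zero_le.trans_lt hki).ne']

theorem adjMatrix_top_mul_triangularizingBasis :
    (⊤ : SimpleGraph (Fin (m + 1))).adjMatrix ℤ * triangularizingBasis m =
      triangularizingBasis m * completeAdjTriangular m := by
  ext i k
  cases k using Fin.cases with
  | zero =>
    rw [SimpleGraph.adjMatrix_mul_apply, mul_apply, Fin.sum_univ_succ]
    simp [triangularizingBasis, completeAdjTriangular, Finset.card_compl]
  | succ k =>
    by_cases h : i = k.succ <;>
      simp [mul_apply, triangularizingBasis, completeAdjTriangular, Fin.sum_univ_succ, one_apply, h]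

end CompleteGraph

theorem det_rookAdj_succ (m : ℕ) :
    (rookAdj (m + 1)).det = (-2) ^ (m ^ 2) * ((m : ℤ) - 1) ^ (2 * m) * (2 * m) := by
  have hB := adjMatrix_top_mul_triangularizingBasis m
  have hP : IsUnit (triangularizingBasis m).det := by simp [det_triangularizingBasis]
  have hS := completeAdjTriangular_isUpperTriangular m
  rw [rookAdj_eq_kroneckerSum, det_kroneckerSum_eq_of_mul_eq_mul hB hB hP hP,
    det_kroneckerSum_of_isUpperTriangular hS hS]
  simp only [completeAdjTriangular, of_apply, Fin.prod_univ_succ, Fin.succ_ne_zero, ↓reduceIte,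
    Finset.prod_const, Finset.card_univ, Fintype.card_fin]
  rw [mul_pow, ← pow_mul, ← sq, two_mul, pow_add]
  ring

/-- The determinant of the adjacency matrix of the rook's graph is
`(-2)^{(n-1)²} (n-2)^{2n-2} · 2(n-1)`; consequently the Smith group (the cokernel of
the adjacency matrix over `ℤ`) is finite of order `2^{(n-1)²} (n-2)^{2n-2} · 2(n-1)`. -/
theorem rook_adj_det_and_smith_group_card (n : ℕ) (hn : 3 ≤ n) :
    (rookAdj n).det = (-2) ^ ((n - 1) ^ 2) * ((n : ℤ) - 2) ^ (2 * n - 2) * (2 * ((n : ℤ) - 1)) ∧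
    Finite ((Fin n × Fin n → ℤ) ⧸ LinearMap.range (rookAdj n).mulVecLin) ∧
    Nat.card ((Fin n × Fin n → ℤ) ⧸ LinearMap.range (rookAdj n).mulVecLin)
      = 2 ^ ((n - 1) ^ 2) * (n - 2) ^ (2 * n - 2) * (2 * (n - 1)) := by
  obtain ⟨m, rfl⟩ : ∃ m, n = m + 1 := ⟨n - 1, by omega⟩
  have hdet : (rookAdj (m + 1)).det
      = (-2) ^ ((m + 1 - 1) ^ 2) * (((m + 1 : ℕ) : ℤ) - 2) ^ (2 * (m + 1) - 2)
        * (2 * (((m + 1 : ℕ) : ℤ) - 1)) := by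
    rw [det_rookAdj_succ, show 2 * (m + 1) - 2 = 2 * m by omega]
    push_cast
    ring
  have hne : (rookAdj (m + 1)).det ≠ 0 := by
    rw [det_rookAdj_succ]
    exact mul_ne_zero (mul_ne_zero (pow_ne_zero _ (by norm_num)) (pow_ne_zero _ (by omega)))
      (by omega)
  have hcard := natCard_quotient_range_mulVecLin _ hne
  refine ⟨hdet, Nat.finite_of_card_ne_zero (by simpa [hcard] using hne), ?_⟩
  have hm : (m : ℤ) - 1 = ((m - 1 : ℕ) : ℤ) := by omega
  rw [hcard, det_rookAdj_succ, hm]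
  simp [Int.natAbs_mul, Int.natAbs_pow, show m + 1 - 2 = m - 1 by omega,
    show 2 * (m + 1) - 2 = 2 * m by omega]
end

section
/- For n ≥ 3, the Smith group of the n×n rook's graph R_n (the cokernel of its adjacency matrix over Z) is isomorphic to (Z/2)^{(n-2)²} ⊕ (Z/2(n-2))^{2n-3} ⊕ Z/(2(n-1)(n-2)). -/
/-!
The rook's graph is the Cartesian square of the complete graph, so its adjacency matrix `A` acts on
outer products by `A (f ⊗ g) = K f ⊗ g + f ⊗ K g` with `K = J - I`. Index the grid by
`Option (Option β)` with `#β = n - 2`, singling out the two lines `none` and `some none`. Explicit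
outer products then give a `ℤ`-basis `slotCol` of `ℤ^{n×n}`, with dual basis `slotRow`, in which `A`
is in Smith normal form: `d k • slotCol k` lies in the image of `A`, and `d k` divides the `k`-th row
of `slotRow * A`. The invariant `d` is `2` on the `(n-2)²` interior slots, `2(n-2)` on the `2n-3`
border slots, `2(n-1)(n-2)` at the corner and `1` on the remaining `2n-2` slots.
-/

open Matrix

namespace Matrix

section SmithForm

variable {ι κ : Type*} [Fintype ι]

def residuesMod (C : Matrix κ ι ℤ) (d : κ → ℕ) : (ι → ℤ) →ₗ[ℤ] ∀ k, ZMod (d k) :=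
  (LinearMap.pi fun k => (Int.castAddHom (ZMod (d k))).toIntLinearMap ∘ₗ LinearMap.proj k) ∘ₗ
    C.mulVecLin

lemma residuesMod_apply (C : Matrix κ ι ℤ) (d : κ → ℕ) (x : ι → ℤ) (k : κ) :
    residuesMod C d x k = ((C *ᵥ x) k : ZMod (d k)) := rfl

variable [Fintype κ]

lemma residuesMod_surjective [DecidableEq κ] {B : Matrix ι κ ℤ} {C : Matrix κ ι ℤ}
    (hCB : C * B = 1) (d : κ → ℕ) : Function.Surjective (residuesMod C d) := by
  intro t
  refine ⟨B *ᵥ fun k => ((t k).cast : ℤ), funext fun k => ?_⟩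
  rw [residuesMod_apply, mulVec_mulVec, hCB, one_mulVec, ZMod.intCast_zmod_cast]

variable [DecidableEq ι] {A : Matrix ι ι ℤ} {B : Matrix ι κ ℤ} {C : Matrix κ ι ℤ} {d : κ → ℕ}

lemma range_mulVecLin_eq_ker_residuesMod (hBC : B * C = 1)
    (hB : ∀ k, (d k : ℤ) • Bᵀ k ∈ LinearMap.range A.mulVecLin)
    (hC : ∀ k l, (d k : ℤ) ∣ (C * A) k l) :
    LinearMap.range A.mulVecLin = LinearMap.ker (residuesMod C d) := by
  apply le_antisymm
  · rintro _ ⟨y, rfl⟩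
    refine LinearMap.mem_ker.mpr (funext fun k => ?_)
    rw [residuesMod_apply, mulVecLin_apply, mulVec_mulVec, Pi.zero_apply,
      ZMod.intCast_zmod_eq_zero_iff_dvd]
    exact Finset.dvd_sum fun l _ => (hC k l).mul_right _
  · intro x hx
    have hdvd : ∀ k, (d k : ℤ) ∣ (C *ᵥ x) k := fun k =>
      (ZMod.intCast_zmod_eq_zero_iff_dvd _ _).mp (congrFun (LinearMap.mem_ker.mp hx) k)
    have hsum : x = ∑ k, ((C *ᵥ x) k / d k) • ((d k : ℤ) • Bᵀ k) := by
      conv_lhs => rw [← one_mulVec x, ← hBC, ← mulVec_mulVec, mulVec_eq_sum]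
      refine Finset.sum_congr rfl fun k _ => ?_
      rw [smul_smul, Int.ediv_mul_cancel (hdvd k), op_smul_eq_smul]
    rw [hsum]
    exact Submodule.sum_mem _ fun k _ => Submodule.smul_mem _ _ (hB k)

theorem cokernel_equiv_pi_zmod [DecidableEq κ] (hCB : C * B = 1) (hBC : B * C = 1)
    (hB : ∀ k, (d k : ℤ) • Bᵀ k ∈ LinearMap.range A.mulVecLin)
    (hC : ∀ k l, (d k : ℤ) ∣ (C * A) k l) :
    Nonempty (((ι → ℤ) ⧸ LinearMap.range A.mulVecLin) ≃ₗ[ℤ] ∀ k, ZMod (d k)) :=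
  ⟨(Submodule.quotEquivOfEq _ _ (range_mulVecLin_eq_ker_residuesMod hBC hB hC)).trans
    ((residuesMod C d).quotKerEquivOfSurjective (residuesMod_surjective hCB d))⟩

end SmithForm

section Reindex

variable {R ι κ : Type*} [CommRing R] [Fintype ι] [Fintype κ]

lemma range_mulVecLin_submatrix_equiv (A : Matrix ι ι R) (e : κ ≃ ι) :
    LinearMap.range (A.submatrix e e).mulVecLin =
      (LinearMap.range A.mulVecLin).map (LinearEquiv.funCongrLeft R R e).toLinearMap := by
  have h : (A.submatrix e e).mulVecLin = (LinearEquiv.funCongrLeft R R e).toLinearMap ∘ₗ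
      A.mulVecLin ∘ₗ (LinearEquiv.funCongrLeft R R e.symm).toLinearMap := by
    ext v : 1
    exact submatrix_mulVec_equiv A v e e
  rw [h, LinearMap.range_comp, LinearMap.range_comp_of_range_eq_top _ (LinearEquiv.range _)]

theorem cokernel_submatrix_equiv (A : Matrix ι ι R) (e : κ ≃ ι) :
    Nonempty (((κ → R) ⧸ LinearMap.range (A.submatrix e e).mulVecLin) ≃ₗ[R]
      ((ι → R) ⧸ LinearMap.range A.mulVecLin)) :=
  ⟨(Submodule.Quotient.equiv _ _ (LinearEquiv.funCongrLeft R R e)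
    (range_mulVecLin_submatrix_equiv A e).symm).symm⟩

end Reindex

end Matrix

section Outer

variable {α : Type*}

def outer (f g : α → ℤ) : α × α → ℤ := fun p => f p.1 * g p.2

@[simp] lemma outer_apply (f g : α → ℤ) (p : α × α) : outer f g p = f p.1 * g p.2 := rfl

@[simp] lemma outer_add_left (f f' g : α → ℤ) : outer (f + f') g = outer f g + outer f' g := by
  ext; simp [add_mul]

@[simp] lemma outer_add_right (f g g' : α → ℤ) : outer f (g + g') = outer f g + outer f g' := by
  ext; simp [mul_add]

@[simp] lemma outer_sub_left (f f' g : α → ℤ) : outer (f - f') g = outer f g - outer f' g := by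
  ext; simp [sub_mul]

@[simp] lemma outer_sub_right (f g g' : α → ℤ) : outer f (g - g') = outer f g - outer f g' := by
  ext; simp [mul_sub]

@[simp] lemma outer_smul_left (n : ℤ) (f g : α → ℤ) : outer (n • f) g = n • outer f g := by
  ext; simp [mul_assoc]

@[simp] lemma outer_smul_right (n : ℤ) (f g : α → ℤ) : outer f (n • g) = n • outer f g := by
  ext; simp [mul_left_comm]

lemma outer_dotProduct_outer [Fintype α] (f g u v : α → ℤ) :
    outer f g ⬝ᵥ outer u v = (f ⬝ᵥ u) * (g ⬝ᵥ v) := by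
  simp only [dotProduct, Fintype.sum_prod_type, outer_apply, Finset.sum_mul_sum]
  exact Finset.sum_congr rfl fun _ _ => Finset.sum_congr rfl fun _ _ => by ring

end Outer

def rookMatrix (α : Type*) [DecidableEq α] : Matrix (α × α) (α × α) ℤ :=
  fun u v => if u ≠ v ∧ (u.1 = v.1 ∨ u.2 = v.2) then 1 else 0

lemma rookAdj_eq_rookMatrix (n : ℕ) : rookAdj n = rookMatrix (Fin n) := rfl

section RookMatrix

variable {α : Type*} [DecidableEq α]

lemma rookMatrix_apply (a b a' b' : α) :
    rookMatrix α (a, b) (a', b') = (if a = a' then 1 else 0) + (if b = b' then 1 else 0)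
      - 2 * ((if a = a' then 1 else 0) * (if b = b' then 1 else 0)) := by
  by_cases h1 : a = a' <;> by_cases h2 : b = b' <;> simp [rookMatrix, h1, h2]

lemma rookMatrix_isSymm : (rookMatrix α).IsSymm := by
  ext ⟨a, b⟩ ⟨a', b'⟩
  simp only [transpose_apply, rookMatrix_apply, eq_comm]

lemma rookMatrix_submatrix {α' : Type*} [DecidableEq α'] (e : α ≃ α') :
    (rookMatrix α').submatrix (e.prodCongr e) (e.prodCongr e) = rookMatrix α := by
  ext ⟨a, b⟩ ⟨a', b'⟩
  simp [rookMatrix]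

variable [Fintype α]

lemma rookMatrix_mulVec_apply (v : α × α → ℤ) (a b : α) :
    (rookMatrix α *ᵥ v) (a, b) = ∑ j, v (a, j) + ∑ i, v (i, b) - 2 * v (a, b) := by
  simp only [mulVec, dotProduct, Fintype.sum_prod_type, rookMatrix_apply, add_mul, sub_mul,
    mul_assoc, ite_mul, one_mul, zero_mul, Finset.sum_add_distrib, Finset.sum_sub_distrib,
    ← Finset.mul_sum, Finset.sum_ite_irrel, Finset.sum_const_zero, Finset.sum_ite_eq,
    Finset.mem_univ, if_true]

lemma rookMatrix_mulVec_outer (f g : α → ℤ) :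
    rookMatrix α *ᵥ outer f g =
      outer ((∑ i, f i) • 1 - f) g + outer f ((∑ j, g j) • 1 - g) := by
  ext ⟨a, b⟩
  simp only [rookMatrix_mulVec_apply, outer_apply, ← Finset.mul_sum, ← Finset.sum_mul,
    Pi.add_apply, Pi.sub_apply, Pi.smul_apply, Pi.one_apply, smul_eq_mul]
  ring

end RookMatrix

namespace RookSmith

variable (β : Type*) [Fintype β] [DecidableEq β]

abbrev Point := Option (Option β)

abbrev Boundary := (Option β ⊕ β) ⊕ Unit

/-- Interior slots `(a, b)`; the boundary slots `(x, none)`, `(none, b)` and `(none, none)`; and a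
second copy of the boundary, whose basis vectors are the images under `A` of the first copy. -/
abbrev Slot := (β × β) ⊕ Boundary β ⊕ Boundary β

local notation "δ" x:max => Pi.single x (1 : ℤ)

variable {β}

def edgeVec (x : Option β) : Point β → ℤ := δ (some x) - δ none

def boundaryVec : Boundary β → (Point β × Point β → ℤ)
  | .inl (.inl x) => outer (edgeVec x) (δ none)
  | .inl (.inr b) => outer (δ none) (edgeVec (some b))
  | .inr _ => outer (δ none) (δ none)

def slotCol : Slot β → (Point β × Point β → ℤ)
  | .inl (a, b) => outer (edgeVec (some a)) (edgeVec (some b))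
  | .inr (.inl k) => boundaryVec k
  | .inr (.inr k) => rookMatrix (Point β) *ᵥ boundaryVec k

def slotRow : Slot β → (Point β × Point β → ℤ)
  | .inl (a, b) => outer (δ (some (some a)) - δ (some none)) (δ (some (some b)) - δ (some none))
  | .inr (.inl (.inl (.inl x))) =>
      outer (δ (some x)) (1 - Pi.single (some none) (Fintype.card β : ℤ)) - outer 1 (δ (some none))
  | .inr (.inl (.inl (.inr b))) =>
      outer (1 - Pi.single (some none) (Fintype.card β : ℤ)) (δ (some (some b)) - δ (some none))
  | .inr (.inl (.inr _)) => outer 1 (1 - Pi.single (some none) (2 * (Fintype.card β + 1) : ℤ))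
  | .inr (.inr (.inl (.inl x))) => outer (δ (some x)) (δ (some none))
  | .inr (.inr (.inl (.inr b))) => outer (δ (some none)) (δ (some (some b)) - δ (some none))
  | .inr (.inr (.inr _)) => outer 1 (δ (some none))

variable (β) in
def slotInvariant : Slot β → ℕ
  | .inl _ => 2
  | .inr (.inl (.inl _)) => 2 * Fintype.card β
  | .inr (.inl (.inr _)) => 2 * (Fintype.card β + 1) * Fintype.card β
  | .inr (.inr _) => 1

omit [DecidableEq β] in
lemma card_slot : Fintype.card (Slot β) = Fintype.card (Point β × Point β) := by
  simp only [Fintype.card_sum, Fintype.card_prod, Fintype.card_option, Fintype.card_unit]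
  ring

lemma slotRow_dotProduct_slotCol (k l : Slot β) :
    slotRow k ⬝ᵥ slotCol l = if k = l then 1 else 0 := by
  rcases k with ⟨a, b⟩ | ((x | b) | ⟨⟩) | ((x | b) | ⟨⟩) <;>
  rcases l with ⟨a', b'⟩ | ((x' | b') | ⟨⟩) | ((x' | b') | ⟨⟩) <;>
  simp [-zsmul_eq_mul, slotRow, slotCol, boundaryVec, edgeVec, mulVec_sub,
    rookMatrix_mulVec_outer, outer_dotProduct_outer, Pi.single_apply] <;>
  grind

lemma smul_slotCol_mem_range (k : Slot β) :
    (slotInvariant β k : ℤ) • slotCol k ∈ LinearMap.range (rookMatrix (Point β)).mulVecLin := by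
  rcases k with ⟨a, b⟩ | ((x | b) | ⟨⟩) | k
  on_goal 1 => refine ⟨-slotCol (.inl (a, b)), ?_⟩
  on_goal 2 => refine ⟨outer (edgeVec x) (1 - Pi.single none (Fintype.card β : ℤ)), ?_⟩
  on_goal 3 => refine ⟨outer (1 - Pi.single none (Fintype.card β : ℤ)) (edgeVec (some b)), ?_⟩
  on_goal 4 =>
    refine ⟨(Fintype.card β + 1 : ℤ) • (outer (δ none) 1 + outer 1 (δ none)) - outer 1 1
      - ((Fintype.card β + 1) * Fintype.card β : ℤ) • outer (δ none) (δ none), ?_⟩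
  on_goal 5 => exact ⟨boundaryVec k, by simp [slotCol, slotInvariant]⟩
  all_goals
    ext ⟨i, j⟩
    simp [-zsmul_eq_mul, slotCol, boundaryVec, slotInvariant, edgeVec, mulVec_add, mulVec_sub,
      mulVec_smul, rookMatrix_mulVec_outer, Pi.single_apply]
    grind

lemma rookMatrix_mulVec_slotRow (k : Slot β) :
    ∃ v, rookMatrix (Point β) *ᵥ slotRow k = (slotInvariant β k : ℤ) • v := by
  rcases k with ⟨a, b⟩ | ((x | b) | ⟨⟩) | k
  on_goal 1 => refine ⟨-slotRow (.inl (a, b)), ?_⟩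
  on_goal 2 => refine ⟨outer (δ (some x) - 1) (δ (some none)), ?_⟩
  on_goal 3 => refine ⟨outer (δ (some none)) (δ (some (some b)) - δ (some none)), ?_⟩
  on_goal 4 => refine ⟨-outer 1 (δ (some none)), ?_⟩
  on_goal 5 => exact ⟨rookMatrix _ *ᵥ slotRow (.inr (.inr k)), by simp [slotInvariant]⟩
  all_goals
    ext ⟨i, j⟩
    simp [-zsmul_eq_mul, slotRow, slotInvariant, mulVec_sub, rookMatrix_mulVec_outer,
      Pi.single_apply]
    grind

variable (β) in
def piSlotEquiv : (∀ k : Slot β, ZMod (slotInvariant β k)) ≃ₗ[ℤ]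
    (β × β → ZMod 2) × (Option β ⊕ β → ZMod (2 * Fintype.card β)) ×
      ZMod (2 * (Fintype.card β + 1) * Fintype.card β) :=
  LinearEquiv.sumPiEquivProdPi ℤ _ _ _ ≪≫ₗ LinearEquiv.prodCongr (LinearEquiv.refl _ _)
    (LinearEquiv.sumPiEquivProdPi ℤ _ _ _ ≪≫ₗ LinearEquiv.prodUnique (M₂ := Boundary β → ZMod 1) ≪≫ₗ
      LinearEquiv.sumPiEquivProdPi ℤ _ _ _ ≪≫ₗ LinearEquiv.prodCongr (LinearEquiv.refl _ _)
        (LinearEquiv.funUnique Unit ℤ (ZMod (2 * (Fintype.card β + 1) * Fintype.card β))))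

variable (β) in
theorem cokernel_rookMatrix_equiv :
    Nonempty (((Point β × Point β → ℤ) ⧸ LinearMap.range (rookMatrix (Point β)).mulVecLin) ≃ₗ[ℤ]
      (β × β → ZMod 2) × (Option β ⊕ β → ZMod (2 * Fintype.card β)) ×
        ZMod (2 * (Fintype.card β + 1) * Fintype.card β)) := by
  let B : Matrix (Point β × Point β) (Slot β) ℤ := Matrix.of fun p k => slotCol k p
  let C : Matrix (Slot β) (Point β × Point β) ℤ := Matrix.of slotRow
  have hCB : C * B = 1 := by
    ext k l
    exact slotRow_dotProduct_slotCol k l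
  have hBC : B * C = 1 := (mul_eq_one_comm_of_equiv (Fintype.equivOfCardEq card_slot)).mp hCB
  have hC (k : Slot β) (l : Point β × Point β) :
      (slotInvariant β k : ℤ) ∣ (C * rookMatrix (Point β)) k l := by
    obtain ⟨v, hv⟩ := rookMatrix_mulVec_slotRow k
    have hCA : (C * rookMatrix (Point β)) k l = (rookMatrix (Point β) *ᵥ slotRow k) l := by
      rw [← vecMul_transpose, rookMatrix_isSymm.eq]
      rfl
    rw [hCA, hv, Pi.smul_apply, smul_eq_mul]
    exact dvd_mul_right _ _
  obtain ⟨e⟩ := Matrix.cokernel_equiv_pi_zmod hCB hBC smul_slotCol_mem_range hC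
  exact ⟨e ≪≫ₗ piSlotEquiv β⟩

end RookSmith

/-- The Smith group of the rook's graph (the cokernel of its adjacency matrix over `ℤ`)
is `(ℤ/2)^{(n-2)²} ⊕ (ℤ/2(n-2))^{2n-3} ⊕ ℤ/2(n-1)(n-2)`. -/
theorem rook_smith_group (n : ℕ) (hn : 3 ≤ n) :
    Nonempty
      (((Fin n × Fin n → ℤ) ⧸ LinearMap.range (rookAdj n).mulVecLin) ≃+
        ((Fin ((n - 2) ^ 2) → ZMod 2) × (Fin (2 * n - 3) → ZMod (2 * (n - 2))) ×
          ZMod (2 * (n - 1) * (n - 2)))) := by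
  obtain ⟨c, rfl⟩ : ∃ c, n = c + 2 := ⟨n - 2, by omega⟩
  let eGrid : Fin (c + 2) ≃ RookSmith.Point (Fin c) :=
    (finSuccEquiv (c + 1)).trans (Equiv.optionCongr (finSuccEquiv c))
  have hReindex := Matrix.cokernel_submatrix_equiv (rookMatrix _) (eGrid.prodCongr eGrid)
  have hSmith := RookSmith.cokernel_rookMatrix_equiv (Fin c)
  rw [rookMatrix_submatrix, ← rookAdj_eq_rookMatrix] at hReindex
  rw [Fintype.card_fin] at hSmith
  obtain ⟨eReindex⟩ := hReindex
  obtain ⟨eSmith⟩ := hSmith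
  rw [show c + 2 - 2 = c by omega, show c + 2 - 1 = c + 1 by omega]
  have eInterior : Fin (c ^ 2) ≃ Fin c × Fin c := Fintype.equivOfCardEq (by simp [sq])
  have eBorder : Fin (2 * (c + 2) - 3) ≃ Option (Fin c) ⊕ Fin c :=
    Fintype.equivOfCardEq (by simp; omega)
  exact ⟨(eReindex ≪≫ₗ eSmith ≪≫ₗ LinearEquiv.prodCongr (LinearEquiv.funCongrLeft ℤ _ eInterior)
    (LinearEquiv.prodCongr (LinearEquiv.funCongrLeft ℤ _ eBorder) (LinearEquiv.refl ℤ _))).toAddEquiv⟩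
end

section
/- For n ≥ 3, let c_1 be the integer vector on {1,...,n}×{1,...,n} with c_1(1,1) = -1, c_1(1,2) = 1, and 0 elsewhere. Then 2n² · c_1 lies in the image of the Laplacian of the rook's graph R_n; explicitly, 2n²·c_1 = L·F where F(1,1) = -(n+1), F(1,2) = n+1, F(i,1) = -1 and F(i,2) = 1 for 2 ≤ i ≤ n, and F = 0 elsewhere. -/
/-- The configuration `c₁`: `-1` at `(1,1)`, `1` at `(1,2)`, `0` elsewhere
(0-based indices). -/
def c1 (n : ℕ) : Fin n × Fin n → ℤ := fun p =>
  if p.1.val = 0 ∧ p.2.val = 0 then -1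
  else if p.1.val = 0 ∧ p.2.val = 1 then 1
  else 0


lemma rookAdj_split (n : ℕ) (u v : Fin n × Fin n) :
    rookAdj n u v = (if u.1 = v.1 ∧ u.2 ≠ v.2 then 1 else 0)
      + (if u.2 = v.2 ∧ u.1 ≠ v.1 then 1 else 0) := by
  unfold rookAdj
  by_cases h1 : u.1 = v.1 <;> by_cases h2 : u.2 = v.2 <;>
    simp [h1, h2, Prod.ext_iff]

lemma sumA (n : ℕ) (hn : 2 ≤ n) (a b : ℤ) :
    ∑ k : Fin n, (if k.val = 0 then a else if k.val = 1 then b else 0) = a + b := by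
  have h0 : (0:ℕ) < n := by omega
  have h1 : (1:ℕ) < n := by omega
  have he : ∀ k : Fin n, (if k.val = 0 then a else if k.val = 1 then b else 0)
      = (if k = ⟨0,h0⟩ then a else 0) + (if k = ⟨1,h1⟩ then b else 0) := by
    intro k
    rcases k with ⟨kv, hk⟩
    simp only [Fin.mk.injEq]
    split_ifs <;> first | omega | ring
  simp only [he, Finset.sum_add_distrib, Finset.sum_ite_eq' Finset.univ,
    Finset.mem_univ, if_true]

lemma sumB (n : ℕ) (hn : 1 ≤ n) (a b : ℤ) :
    ∑ i : Fin n, (if i.val = 0 then a else b) = a + ((n:ℤ) - 1) * b := by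
  have h0 : (0:ℕ) < n := by omega
  have he : ∀ i : Fin n, (if i.val = 0 then a else b)
      = (if i = ⟨0,h0⟩ then a - b else 0) + b := by
    intro i
    rcases i with ⟨iv, hi⟩
    simp only [Fin.mk.injEq]
    split_ifs <;> first | omega | ring
  simp only [he, Finset.sum_add_distrib, Finset.sum_ite_eq' Finset.univ,
    Finset.mem_univ, if_true, Finset.sum_const, Finset.card_univ, Fintype.card_fin]
  push_cast
  ring

lemma sumC (n : ℕ) (c : Fin n) :
    ∑ k : Fin n, (if c = k then (0:ℤ) else 1) = (n:ℤ) - 1 := by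
  have he : ∀ k : Fin n, (if c = k then (0:ℤ) else 1)
      = 1 - (if c = k then 1 else 0) := by
    intro k; split_ifs <;> ring
  simp only [he, Finset.sum_sub_distrib, Finset.sum_ite_eq Finset.univ,
    Finset.mem_univ, if_true, Finset.sum_const, Finset.card_univ, Fintype.card_fin]
  ring

lemma rookAdj_deg (n : ℕ) (u : Fin n × Fin n) :
    ∑ v, rookAdj n u v = 2 * ((n:ℤ) - 1) := by
  simp only [rookAdj_split, Finset.sum_add_distrib]
  rw [Fintype.sum_prod_type, Fintype.sum_prod_type]
  have e1 : ∀ i : Fin n, ∑ k : Fin n, (if u.1 = i ∧ u.2 ≠ k then (1:ℤ) else 0)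
      = if u.1 = i then ∑ k : Fin n, (if u.2 = k then (0:ℤ) else 1) else 0 := by
    intro i
    have hp : ∀ k : Fin n, (if u.1 = i ∧ u.2 ≠ k then (1:ℤ) else 0)
        = if u.1 = i then (if u.2 = k then 0 else 1) else 0 := by
      intro k; by_cases h : u.1 = i <;> by_cases h2 : u.2 = k <;> simp [h, h2]
    simp only [hp]
    by_cases h : u.1 = i <;> simp [h]
  have e2 : ∀ i : Fin n, ∑ k : Fin n, (if u.2 = k ∧ u.1 ≠ i then (1:ℤ) else 0)
      = if u.1 = i then 0 else ∑ k : Fin n, (if u.2 = k then (1:ℤ) else 0) := by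
    intro i
    by_cases h : u.1 = i <;> simp [h]
  simp only [e1, e2, Finset.sum_ite_eq Finset.univ, Finset.mem_univ, if_true, sumC]
  ring

def Fv (n : ℕ) : Fin n × Fin n → ℤ := fun p =>
  if p.1.val = 0 ∧ p.2.val = 0 then -((n : ℤ) + 1)
  else if p.1.val = 0 ∧ p.2.val = 1 then (n : ℤ) + 1
  else if p.2.val = 0 then -1
  else if p.2.val = 1 then 1
  else 0

lemma rowsum (n : ℕ) (hn : 2 ≤ n) (r : Fin n) :
    ∑ k : Fin n, Fv n (r, k) = 0 := by
  by_cases hr : r.val = 0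
  · have hf : ∀ k : Fin n, Fv n (r,k)
        = (if k.val = 0 then -((n:ℤ)+1) else if k.val = 1 then (n:ℤ)+1 else 0) := by
      intro k; simp only [Fv, hr, true_and]; split_ifs <;> first | omega | rfl
    simp only [hf, sumA n hn]; ring
  · have hf : ∀ k : Fin n, Fv n (r,k)
        = (if k.val = 0 then (-1:ℤ) else if k.val = 1 then 1 else 0) := by
      intro k; simp only [Fv, hr, false_and, if_false]
    simp only [hf, sumA n hn]; ring

lemma colsum (n : ℕ) (hn : 1 ≤ n) (c : Fin n) :
    ∑ i : Fin n, Fv n (i, c)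
      = if c.val = 0 then -(2*(n:ℤ)) else if c.val = 1 then 2*(n:ℤ) else 0 := by
  by_cases hc0 : c.val = 0
  · have hc1 : ¬ c.val = 1 := by omega
    have hf : ∀ i : Fin n, Fv n (i,c) = (if i.val = 0 then -((n:ℤ)+1) else -1) := by
      intro i; simp [Fv, hc0, hc1]
    simp only [hf, sumB n hn, hc0, if_true]; ring
  · by_cases hc1 : c.val = 1
    · have hf : ∀ i : Fin n, Fv n (i,c) = (if i.val = 0 then (n:ℤ)+1 else 1) := by
        intro i; simp [Fv, hc0, hc1]
      simp only [hf, sumB n hn]; rw [if_neg hc0, if_pos hc1]; ring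
    · have hf : ∀ i : Fin n, Fv n (i,c) = 0 := by
        intro i; simp only [Fv, hc0, hc1, and_false, if_false]
      simp only [hf, hc0, hc1, if_false, Finset.sum_const_zero]

lemma adjsum (n : ℕ) (hn : 3 ≤ n) (u : Fin n × Fin n) :
    ∑ v, rookAdj n u v * Fv n v
      = -(2 * Fv n u) + (∑ i : Fin n, Fv n (i, u.2)) := by
  have hpt : ∀ v, rookAdj n u v * Fv n v
      = (if u.1 = v.1 ∧ u.2 ≠ v.2 then Fv n v else 0)
        + (if u.2 = v.2 ∧ u.1 ≠ v.1 then Fv n v else 0) := by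
    intro v; rw [rookAdj_split]; split_ifs <;> ring
  simp only [hpt, Finset.sum_add_distrib]
  rw [Fintype.sum_prod_type, Fintype.sum_prod_type]
  have e1 : ∀ i : Fin n, (∑ k : Fin n, if u.1 = i ∧ u.2 ≠ k then Fv n (i,k) else 0)
      = if u.1 = i then (∑ k : Fin n, Fv n (i,k)) - Fv n (i, u.2) else 0 := by
    intro i
    have hp : ∀ k : Fin n, (if u.1 = i ∧ u.2 ≠ k then Fv n (i,k) else 0)
        = if u.1 = i then (Fv n (i,k) - (if u.2 = k then Fv n (i,k) else 0)) else 0 := by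
      intro k; by_cases h : u.1 = i <;> by_cases h2 : u.2 = k <;> simp [h, h2]
    simp only [hp]
    by_cases h : u.1 = i <;>
      simp [h, Finset.sum_sub_distrib, Finset.sum_ite_eq Finset.univ]
  have e2 : ∀ i : Fin n, (∑ k : Fin n, if u.2 = k ∧ u.1 ≠ i then Fv n (i,k) else 0)
      = (Fv n (i, u.2) - (if u.1 = i then Fv n (i, u.2) else 0)) := by
    intro i
    by_cases h : u.1 = i
    · simp [h]
    · simp [h, Finset.sum_ite_eq Finset.univ]
  simp only [e1, e2, Finset.sum_ite_eq Finset.univ, Finset.mem_univ, if_true,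
    Finset.sum_sub_distrib, Finset.sum_ite_eq Finset.univ]
  rw [rowsum n (by omega) u.1]
  have : u = (u.1, u.2) := rfl
  rw [← this]
  ring

lemma key (n : ℕ) (hn : 3 ≤ n) :
    (rookLap n).mulVec (Fv n) = (2 * (n : ℤ) ^ 2) • c1 n := by
  funext u
  have hmul : (rookLap n).mulVec (Fv n) u
      = (∑ v, rookAdj n u v) * Fv n u - ∑ v, rookAdj n u v * Fv n v := by
    simp only [rookLap, Matrix.sub_mulVec, Pi.sub_apply, Matrix.mulVec_diagonal]
    simp [Matrix.mulVec, dotProduct]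
  rw [hmul, rookAdj_deg, adjsum n hn, colsum n (by omega)]
  simp only [Fv, c1, Pi.smul_apply, smul_eq_mul]
  split_ifs
  all_goals first | omega | ring

/-- `2n² · c₁` lies in the image of the Laplacian of the rook's graph, with explicit
firing sequence `F`. -/
theorem rook_lap_firing_c1 (n : ℕ) (hn : 3 ≤ n) :
    (rookLap n).mulVec (fun p =>
        if p.1.val = 0 ∧ p.2.val = 0 then -((n : ℤ) + 1)
        else if p.1.val = 0 ∧ p.2.val = 1 then (n : ℤ) + 1
        else if p.2.val = 0 then -1
        else if p.2.val = 1 then 1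
        else 0)
      = (2 * (n : ℤ) ^ 2) • c1 n ∧
    (2 * (n : ℤ) ^ 2) • c1 n ∈ LinearMap.range (rookLap n).mulVecLin := by
  have h : (rookLap n).mulVec (Fv n) = (2 * (n : ℤ) ^ 2) • c1 n := key n hn
  exact ⟨h, ⟨Fv n, by rw [Matrix.mulVecLin_apply]; exact h⟩⟩
end

section
/- For n ≥ 3, let c_2 be the integer vector on {1,...,n}×{1,...,n} with c_2(1,1) = -(n-1), c_2(1,j) = 1 for 2 ≤ j ≤ n, and 0 elsewhere. Then 2n · c_2 lies in the image of the Laplacian of the rook's graph R_n; explicitly, 2n·c_2 = L·F where F(1,1) = -n, F(1,j) = 1 for 2 ≤ j ≤ n, F(i,1) = -1 for 2 ≤ i ≤ n, and F = 0 elsewhere. -/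
/-- The configuration `c₂`: `-(n-1)` at `(1,1)`, `1` along the rest of the first row,
`0` elsewhere (0-based indices). -/
def c2 (n : ℕ) : Fin n × Fin n → ℤ := fun p =>
  if p.1.val = 0 ∧ p.2.val = 0 then -((n : ℤ) - 1)
  else if p.1.val = 0 then 1
  else 0

lemma rookAdj_eq (n : ℕ) (u v : Fin n × Fin n) :
    rookAdj n u v = (if u.1 = v.1 then 1 else 0) + (if u.2 = v.2 then 1 else 0)
      - 2 * (if u = v then 1 else 0) := by
  unfold rookAdj
  rcases u with ⟨a,b⟩; rcases v with ⟨c,d⟩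
  by_cases h1 : a = c <;> by_cases h2 : b = d <;> simp [h1, h2, Prod.ext_iff]

lemma rookAdj_sum (n : ℕ) (u : Fin n × Fin n) (g : Fin n × Fin n → ℤ) :
    ∑ v, rookAdj n u v * g v
      = (∑ j, g (u.1, j)) + (∑ i, g (i, u.2)) - 2 * g u := by
  simp only [rookAdj_eq, sub_mul, add_mul, ite_mul, one_mul, zero_mul]
  rw [Finset.sum_sub_distrib, Finset.sum_add_distrib]
  congr 1
  congr 1
  · rw [Fintype.sum_prod_type]
    rw [Finset.sum_congr rfl (fun a _ => show (∑ b, if u.1 = a then g (a,b) else 0)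
      = if u.1 = a then ∑ b, g (a,b) else 0 by split <;> simp)]
    simp
  · rw [Fintype.sum_prod_type_right]
    rw [Finset.sum_congr rfl (fun b _ => show (∑ a, if u.2 = b then g (a,b) else 0)
      = if u.2 = b then ∑ a, g (a,b) else 0 by split <;> simp)]
    simp
  · simp [mul_ite, ite_mul, Finset.sum_ite_eq]

lemma sum_if_zero (n : ℕ) (hn : 0 < n) (c d : ℤ) :
    ∑ j : Fin n, (if j.val = 0 then c else d) = c + ((n : ℤ) - 1) * d := by
  have h : ∀ j : Fin n, (if j.val = 0 then c else d)
      = d + if (⟨0, hn⟩ : Fin n) = j then c - d else 0 := by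
    intro j
    by_cases hj : j.val = 0 <;> simp [hj, Fin.ext_iff, eq_comm]
  rw [Finset.sum_congr rfl fun j _ => h j, Finset.sum_add_distrib, Finset.sum_const,
    Finset.sum_ite_eq]
  simp
  ring

def rookF (n : ℕ) : Fin n × Fin n → ℤ := fun p =>
  if p.1.val = 0 ∧ p.2.val = 0 then -(n : ℤ)
  else if p.1.val = 0 then 1
  else if p.2.val = 0 then -1
  else 0

lemma rook_main (n : ℕ) (hn : 3 ≤ n) :
    (rookLap n).mulVec (rookF n) = (2 * (n : ℤ)) • c2 n := by
  have hpos : 0 < n := by omega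
  have hn3 : (3 : ℤ) ≤ (n : ℤ) := by exact_mod_cast hn
  funext p
  have hdeg : ∑ v, rookAdj n p v = (n : ℤ) + n - 2 := by
    have h := rookAdj_sum n p (fun _ => 1)
    simpa using h
  have hrow : ∑ j, rookF n (p.1, j) = -1 := by
    by_cases hp1 : p.1.val = 0
    · rw [Finset.sum_congr rfl (fun j _ => show rookF n (p.1, j)
        = if j.val = 0 then -(n:ℤ) else 1 by simp [rookF, hp1]), sum_if_zero n hpos]
      ring
    · rw [Finset.sum_congr rfl (fun j _ => show rookF n (p.1, j)
        = if j.val = 0 then (-1 : ℤ) else 0 by simp [rookF, hp1]), sum_if_zero n hpos]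
      ring
  have hcol : ∑ i, rookF n (i, p.2) = if p.2.val = 0 then -(2*(n:ℤ)) + 1 else 1 := by
    by_cases hp2 : p.2.val = 0
    · rw [Finset.sum_congr rfl (fun i _ => show rookF n (i, p.2)
        = if i.val = 0 then -(n:ℤ) else -1 by by_cases h : i.val = 0 <;> simp [rookF, hp2, h]), sum_if_zero n hpos]
      simp [hp2]; ring
    · rw [Finset.sum_congr rfl (fun i _ => show rookF n (i, p.2)
        = if i.val = 0 then (1:ℤ) else 0 by simp [rookF, hp2]), sum_if_zero n hpos]
      simp [hp2]
  have hmv : (rookLap n).mulVec (rookF n) p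
      = (∑ v, rookAdj n p v) * rookF n p - ∑ v, rookAdj n p v * rookF n v := by
    rw [rookLap, Matrix.sub_mulVec]
    simp only [Pi.sub_apply, Matrix.mulVec_diagonal]
    rfl
  rw [hmv, rookAdj_sum, hdeg, hrow, hcol]
  by_cases hp1 : p.1.val = 0 <;> by_cases hp2 : p.2.val = 0 <;>
    simp [rookF, c2, hp1, hp2] <;> ring


/-- `2n · c₂` lies in the image of the Laplacian of the rook's graph, with explicit
firing sequence `F`. -/
theorem rook_lap_firing_c2 (n : ℕ) (hn : 3 ≤ n) :
    (rookLap n).mulVec (fun p =>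
        if p.1.val = 0 ∧ p.2.val = 0 then -(n : ℤ)
        else if p.1.val = 0 then 1
        else if p.2.val = 0 then -1
        else 0)
      = (2 * (n : ℤ)) • c2 n ∧
    (2 * (n : ℤ)) • c2 n ∈ LinearMap.range (rookLap n).mulVecLin := by
  refine ⟨rook_main n hn, ⟨rookF n, ?_⟩⟩
  rw [Matrix.mulVecLin_apply, rook_main n hn]
end
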